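/- arXiv:1705.05624 — 3 statements merged into one kernel-verified Lean document; each statement's English description precedes it below -/
import Mathlib

section
/- Let f: ℝⁿ → ℝᵐ be measurable and suppose that for every x ∈ ℝⁿ \ N₀, where N₀ is countable, ap-limsup_{y→x} |f(y)-f(x)|/|y-x| < ∞. Then there exist sets B_j, j ∈ ℕ, with ℝⁿ = ⋃_j B_j ∪ N₀, such that for each j the restriction of f to B_j is locally Lipschitz: for all x,y ∈ B_j with |y-x| ≤ 1/j one has |f(y)-f(x)| ≤ 2j|y-x|. -/
open MeasureTheory Metric Filter Set

noncomputable section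

/-- `ℝⁿ` as a Euclidean space. -/
abbrev Ec (n : ℕ) := EuclideanSpace ℝ (Fin n)

/-- The set `A` has vanishing Lebesgue density at `x`. -/
def apSmall {n : ℕ} (x : Ec n) (A : Set (Ec n)) : Prop :=
  Tendsto (fun r : ℝ => volume (A ∩ ball x r) / volume (ball x r))
    (nhdsWithin 0 (Ioi 0)) (nhds 0)

/-- `f` is approximately differentiable of order `k` at `x`, with Taylor polynomial
`y ↦ ∑_{j ≤ k} (p j) (y-x)^j = p.partialSum (k+1) (y-x)` (here the coefficient maps `p j`
already incorporate the factor `1/j!`): the approximate limit of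
`|f y - p_k(x;y)|/|y-x|^k` as `y → x` is `0`. -/
def IsApproxTaylor {n m : ℕ} (f : Ec n → Ec m) (k : ℕ) (x : Ec n)
    (p : FormalMultilinearSeries ℝ (Ec n) (Ec m)) : Prop :=
  ∀ ε > (0 : ℝ),
    apSmall x {y | y ≠ x ∧ ε * ‖y - x‖ ^ k ≤ ‖f y - p.partialSum (k + 1) (y - x)‖}

lemma volume_ball_half_aux {n : ℕ} (x : Ec n) {r : ℝ} (hr : 0 < r) :
    volume (ball x (r / 2)) = ENNReal.ofReal ((1 / 2 : ℝ) ^ n) * volume (ball x r) := by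
  have h1 : (r / 2 : ℝ) = (1 / 2) * r := by ring
  rw [h1, Measure.addHaar_ball_mul_of_pos volume x (by norm_num : (0:ℝ) < 1/2) r,
    Measure.addHaar_ball_center volume x r, finrank_euclideanSpace_fin]

/-- if `ap-limsup_{y→x} |f(y)-f(x)|/|y-x| < ∞` outside a countable set `N₀`,
then `ℝⁿ = ⋃_j B_j ∪ N₀` where `f` restricted to each `B_j` is locally Lipschitz:
`|f(y)-f(x)| ≤ 2j |y-x|` whenever `x, y ∈ B_j` and `|y-x| ≤ 1/j` (indices `j ≥ 1`). -/
theorem countable_decomposition_locally_lipschitz {n m : ℕ} (f : Ec n → Ec m)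
    (hf : Measurable f) (N₀ : Set (Ec n)) (hN₀ : N₀.Countable)
    (h : ∀ x ∉ N₀, ∃ lam : ℝ,
      apSmall x {y | y ≠ x ∧ lam * ‖y - x‖ ≤ ‖f y - f x‖}) :
    ∃ B : ℕ → Set (Ec n),
      (univ : Set (Ec n)) = (⋃ j, B j) ∪ N₀ ∧
      ∀ j : ℕ, ∀ x ∈ B j, ∀ y ∈ B j,
        ‖y - x‖ ≤ 1 / (j + 1 : ℝ) → ‖f y - f x‖ ≤ 2 * (j + 1 : ℝ) * ‖y - x‖ := by
  classical
  set bad : ℕ → Ec n → Set (Ec n) :=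
    fun j x => {y | y ≠ x ∧ ((j : ℝ) + 1) * ‖y - x‖ ≤ ‖f y - f x‖} with hbad
  set B : ℕ → Set (Ec n) := fun j =>
    {x | x ∉ N₀ ∧ ∀ r : ℝ, 0 < r → r ≤ 1 / (j + 1 : ℝ) →
      volume (bad j x ∩ ball x r) < volume (ball x (r / 2)) / 2} with hBdef
  refine ⟨B, ?_, ?_⟩
  · -- covering
    apply Subset.antisymm _ (subset_univ _)
    intro x _
    by_cases hx : x ∈ N₀
    · exact Or.inr hx
    refine Or.inl ?_
    obtain ⟨lam, hlam⟩ := h x hx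
    have hc : (0 : ENNReal) < ENNReal.ofReal ((1 / 2 : ℝ) ^ n) / 2 := by
      apply ENNReal.div_pos
      · simp only [ne_eq, ENNReal.ofReal_eq_zero, not_le]
        positivity
      · norm_num
    have hev := hlam.eventually_lt_const hc
    rw [(nhdsGT_basis (0 : ℝ)).eventually_iff] at hev
    obtain ⟨r₀, hr₀, hsmall⟩ := hev
    -- choose j
    obtain ⟨j, hj1, hj2⟩ : ∃ j : ℕ, lam ≤ (j : ℝ) + 1 ∧ 1 / ((j : ℝ) + 1) < r₀ := by
      refine ⟨max ⌈lam⌉₊ ⌈1 / r₀⌉₊, ?_, ?_⟩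
      · calc lam ≤ (⌈lam⌉₊ : ℝ) := Nat.le_ceil lam
          _ ≤ (max ⌈lam⌉₊ ⌈1 / r₀⌉₊ : ℕ) := by exact_mod_cast Nat.le_max_left _ _
          _ ≤ _ := by linarith
      · have h1 : (1 : ℝ) / r₀ < (max ⌈lam⌉₊ ⌈1 / r₀⌉₊ : ℕ) + 1 := by
          calc (1 : ℝ) / r₀ ≤ (⌈1 / r₀⌉₊ : ℝ) := Nat.le_ceil _
            _ ≤ (max ⌈lam⌉₊ ⌈1 / r₀⌉₊ : ℕ) := by exact_mod_cast Nat.le_max_right _ _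
            _ < _ := by linarith
        have hpos : (0 : ℝ) < (max ⌈lam⌉₊ ⌈1 / r₀⌉₊ : ℕ) + 1 := by positivity
        rw [div_lt_iff₀ hpos]
        rw [div_lt_iff₀ hr₀] at h1
        linarith [mul_comm r₀ ((max ⌈lam⌉₊ ⌈1 / r₀⌉₊ : ℕ) + 1 : ℝ)]
    refine mem_iUnion.2 ⟨j, hx, ?_⟩
    intro r hr hrle
    have hrlt : r < r₀ := lt_of_le_of_lt hrle hj2
    have hball0 : volume (ball x r) ≠ 0 := (measure_ball_pos volume x hr).ne'
    have hballt : volume (ball x r) ≠ ⊤ := measure_ball_lt_top.ne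
    have hratio := hsmall ⟨hr, hrlt⟩
    rw [ENNReal.div_lt_iff (Or.inl hball0) (Or.inl hballt)] at hratio
    have hsub : bad j x ∩ ball x r ⊆
        {y | y ≠ x ∧ lam * ‖y - x‖ ≤ ‖f y - f x‖} ∩ ball x r := by
      rintro y ⟨⟨hyx, hyb⟩, hyball⟩
      refine ⟨⟨hyx, ?_⟩, hyball⟩
      have : lam * ‖y - x‖ ≤ ((j : ℝ) + 1) * ‖y - x‖ :=
        mul_le_mul_of_nonneg_right hj1 (norm_nonneg _)
      linarith
    calc volume (bad j x ∩ ball x r)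
        ≤ volume ({y | y ≠ x ∧ lam * ‖y - x‖ ≤ ‖f y - f x‖} ∩ ball x r) :=
          measure_mono hsub
      _ < ENNReal.ofReal ((1 / 2 : ℝ) ^ n) / 2 * volume (ball x r) := hratio
      _ = volume (ball x (r / 2)) / 2 := by
          rw [volume_ball_half_aux x hr, div_eq_mul_inv, div_eq_mul_inv, mul_right_comm, div_eq_mul_inv]
  · -- Lipschitz
    rintro j x hxB y hyB hxy
    obtain ⟨hxN, hx⟩ := hxB
    obtain ⟨hyN, hy⟩ := hyB
    rcases eq_or_ne y x with rfl | hne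
    · simp
    set r := ‖y - x‖ with hrdef
    have hrpos : 0 < r := norm_pos_iff.2 (sub_ne_zero.2 hne)
    have hx' := hx r hrpos hxy
    have hy' := hy r hrpos hxy
    set L := ball x r ∩ ball y r with hL
    set mid := midpoint ℝ x y with hmid
    have hsubL : ball mid (r / 2) ⊆ L := by
      intro z hz
      rw [mem_ball] at hz
      have hdx : dist mid x = r / 2 := by
        rw [hmid, dist_comm, dist_left_midpoint (𝕜 := ℝ), Real.norm_two, dist_eq_norm,
          norm_sub_rev, ← hrdef]
        ring
      have hdy : dist mid y = r / 2 := by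
        rw [hmid, dist_comm, dist_right_midpoint (𝕜 := ℝ), Real.norm_two, dist_eq_norm,
          norm_sub_rev, ← hrdef]
        ring
      constructor
      · rw [mem_ball]
        calc dist z x ≤ dist z mid + dist mid x := dist_triangle _ _ _
          _ < r / 2 + r / 2 := by rw [hdx]; linarith
          _ = r := by ring
      · rw [mem_ball]
        calc dist z y ≤ dist z mid + dist mid y := dist_triangle _ _ _
          _ < r / 2 + r / 2 := by rw [hdy]; linarith
          _ = r := by ring
    have hLlb : volume (ball x (r / 2)) ≤ volume L := by
      calc volume (ball x (r / 2)) = volume (ball mid (r / 2)) :=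
            (Measure.addHaar_ball_center volume x _).trans
              (Measure.addHaar_ball_center volume mid _).symm
        _ ≤ volume L := measure_mono hsubL
    have hsum : volume ((bad j x ∪ bad j y) ∩ L) < volume L := by
      calc volume ((bad j x ∪ bad j y) ∩ L)
          = volume ((bad j x ∩ L) ∪ (bad j y ∩ L)) := by rw [union_inter_distrib_right]
        _ ≤ volume (bad j x ∩ L) + volume (bad j y ∩ L) := measure_union_le _ _
        _ ≤ volume (bad j x ∩ ball x r) + volume (bad j y ∩ ball y r) := by
            gcongr
            · exact inter_subset_left
            · exact inter_subset_right
        _ < volume (ball x (r / 2)) / 2 + volume (ball y (r / 2)) / 2 :=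
            ENNReal.add_lt_add hx' hy'
        _ = volume (ball x (r / 2)) := by
            rw [Measure.addHaar_ball_center volume y, Measure.addHaar_ball_center volume x,
              ENNReal.add_halves]
        _ ≤ volume L := hLlb
    have hex : ∃ z, z ∈ L ∧ z ∉ bad j x ∧ z ∉ bad j y := by
      by_contra hcon
      push_neg at hcon
      have : L ⊆ (bad j x ∪ bad j y) ∩ L := by
        intro z hz
        refine ⟨?_, hz⟩
        rcases Classical.em (z ∈ bad j x) with hz1 | hz1
        · exact Or.inl hz1
        · exact Or.inr (hcon z hz hz1)
      exact absurd (measure_mono this) (not_le.2 hsum)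
    obtain ⟨z, ⟨hzx, hzy⟩, hzbx, hzby⟩ := hex
    rw [mem_ball, dist_eq_norm] at hzx hzy
    have hfx : ‖f z - f x‖ ≤ ((j : ℝ) + 1) * ‖z - x‖ := by
      rcases eq_or_ne z x with rfl | hzx'
      · simp
      · have : ¬ (((j : ℝ) + 1) * ‖z - x‖ ≤ ‖f z - f x‖) := fun hc => hzbx ⟨hzx', hc⟩
        linarith [not_le.1 this]
    have hfy : ‖f z - f y‖ ≤ ((j : ℝ) + 1) * ‖z - y‖ := by
      rcases eq_or_ne z y with rfl | hzy'
      · simp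
      · have : ¬ (((j : ℝ) + 1) * ‖z - y‖ ≤ ‖f z - f y‖) := fun hc => hzby ⟨hzy', hc⟩
        linarith [not_le.1 this]
    have htri : ‖f y - f x‖ ≤ ‖f z - f y‖ + ‖f z - f x‖ := by
      have : f y - f x = -(f z - f y) + (f z - f x) := by abel
      rw [this]
      calc ‖-(f z - f y) + (f z - f x)‖ ≤ ‖-(f z - f y)‖ + ‖f z - f x‖ := norm_add_le _ _
        _ = ‖f z - f y‖ + ‖f z - f x‖ := by rw [norm_neg]
    have hj0 : (0 : ℝ) < (j : ℝ) + 1 := by positivity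
    calc ‖f y - f x‖ ≤ ‖f z - f y‖ + ‖f z - f x‖ := htri
      _ ≤ ((j : ℝ) + 1) * ‖z - y‖ + ((j : ℝ) + 1) * ‖z - x‖ := add_le_add hfy hfx
      _ ≤ ((j : ℝ) + 1) * r + ((j : ℝ) + 1) * r := by
          have h1 := mul_le_mul_of_nonneg_left hzy.le hj0.le
          have h2 := mul_le_mul_of_nonneg_left hzx.le hj0.le
          linarith
      _ = 2 * ((j : ℝ) + 1) * ‖y - x‖ := by rw [← hrdef]; ring


end
end

section
/- Let f: ℝⁿ → ℝᵐ be measurable and suppose that for every x outside a countable set N₀, ap-limsup_{y→x} |f(y)-f(x)|/|y-x| < ∞. Then f satisfies Luzin's N-property with respect to the Hausdorff measure H^s for every s ∈ (0, n]: if E ⊆ ℝⁿ with H^s(E) = 0, then H^s(f(E)) = 0. -/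
open MeasureTheory Metric Filter Set

noncomputable section

/-!
If the steep set `{y | λ |y - x| ≤ |f y - f x|}` has density zero at `x`, then for suitable
integers `q ≥ λ` and `j`, at every scale `r ≤ 1/(j+1)` it fills at most a small fraction `c` of
the ball `B(x, r)`. If `x` and `y` both have this property and `ρ = |x - y|` is small, the steep
sets of `x` and `y` cannot cover `B(y, ρ) ⊆ B(x, 2ρ)` (doubling of Lebesgue measure), and a point
`z` outside both gives `|f x - f y| ≤ q |z - x| + q |z - y| ≤ 3 q ρ`. Hence, up to the countable
set `N₀`, `ℝⁿ` is a countable union of pieces on which `f` is Lipschitz, and Lipschitz maps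
preserve `H^s`-null sets.
-/

open Module
open scoped ENNReal NNReal

theorem hausdorffMeasure_image_eq_zero_of_subset_union_iUnion {X Y ι : Type*}
    [EMetricSpace X] [EMetricSpace Y] [MeasurableSpace X] [BorelSpace X]
    [MeasurableSpace Y] [BorelSpace Y] [Countable ι] {s : ℝ} (hs : 0 < s) {f : X → Y}
    {N : Set X} (hN : N.Countable) {t : ι → Set X} {K : ι → ℝ≥0}
    (hf : ∀ i, LipschitzOnWith (K i) f (t i)) {E : Set X} (hE : μH[s] E = 0)
    (hEt : E ⊆ N ∪ ⋃ i, t i) : μH[s] (f '' E) = 0 := by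
  have := Measure.nullSingletonClass_hausdorff Y hs
  have hpiece (i : ι) : μH[s] (f '' (E ∩ t i)) = 0 := by
    refine le_antisymm ?_ zero_le
    calc μH[s] (f '' (E ∩ t i)) ≤ (K i : ℝ≥0∞) ^ s * μH[s] (E ∩ t i) :=
          ((hf i).mono inter_subset_right).hausdorffMeasure_image_le hs.le
      _ = 0 := by rw [measure_mono_null inter_subset_left hE, mul_zero]
  have hcover : f '' E ⊆ f '' N ∪ ⋃ i, f '' (E ∩ t i) := by
    rintro _ ⟨x, hxE, rfl⟩
    rcases hEt hxE with hxN | hxt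
    · exact Or.inl (mem_image_of_mem f hxN)
    · obtain ⟨i, hi⟩ := mem_iUnion.1 hxt
      exact Or.inr (mem_iUnion.2 ⟨i, mem_image_of_mem f ⟨hxE, hi⟩⟩)
  exact measure_mono_null hcover
    (measure_union_null ((hN.image f).measure_zero _) (measure_iUnion_null hpiece))

theorem exists_mem_notMem_of_measure_inter_add_lt {X : Type*} [MeasurableSpace X]
    {μ : Measure X} {B S T : Set X} (h : μ (S ∩ B) + μ (T ∩ B) < μ B) :
    ∃ z ∈ B, z ∉ S ∧ z ∉ T := by
  by_contra! hcover
  have hsub : B ⊆ (S ∩ B) ∪ (T ∩ B) := fun z hz => by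
    by_cases hzS : z ∈ S
    exacts [Or.inl ⟨hzS, hz⟩, Or.inr ⟨hcover z hz hzS, hz⟩]
  exact h.not_ge ((measure_mono hsub).trans (measure_union_le _ _))

theorem measure_ball_two_mul {E : Type*} [NormedAddCommGroup E] [NormedSpace ℝ E]
    [FiniteDimensional ℝ E] [MeasurableSpace E] [BorelSpace E] (μ : Measure E)
    [μ.IsAddHaarMeasure] (x y : E) (r : ℝ) :
    μ (ball x (2 * r)) = 2 ^ finrank ℝ E * μ (ball y r) := by
  rw [Measure.addHaar_ball_mul_of_pos μ x two_pos, Measure.addHaar_ball_center μ y,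
    ENNReal.ofReal_pow zero_le_two, ENNReal.ofReal_ofNat]

section SteepSet

variable {X Y : Type*} [PseudoMetricSpace X] [PseudoMetricSpace Y]

def steepSet (f : X → Y) (q : ℝ) (x : X) : Set X :=
  {y | y ≠ x ∧ q * dist y x ≤ dist (f y) (f x)}

theorem steepSet_anti {f : X → Y} {x : X} {q q' : ℝ} (hq : q ≤ q') :
    steepSet f q' x ⊆ steepSet f q x := fun _ ⟨hne, hle⟩ =>
  ⟨hne, (mul_le_mul_of_nonneg_right hq dist_nonneg).trans hle⟩

theorem dist_le_of_notMem_steepSet {f : X → Y} {x z : X} {q : ℝ} (hz : z ∉ steepSet f q x) :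
    dist (f z) (f x) ≤ q * dist z x := by
  by_cases hzx : z = x
  · simp [hzx]
  · exact (not_le.1 fun hle => hz ⟨hzx, hle⟩).le

variable [MeasurableSpace X]

def lowSteepDensity (μ : Measure X) (c : ℝ≥0∞) (f : X → Y) (q : ℝ≥0) (δ : ℝ) : Set X :=
  {x | ∀ r : ℝ, 0 < r → r ≤ δ → μ (steepSet f q x ∩ ball x r) ≤ c * μ (ball x r)}

end SteepSet

section LowSteepDensity

variable {E Y : Type*} [NormedAddCommGroup E] [NormedSpace ℝ E] [FiniteDimensional ℝ E]
  [MeasurableSpace E] [BorelSpace E] {μ : Measure E} [μ.IsAddHaarMeasure]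
  [PseudoMetricSpace Y] {f : E → Y} {c : ℝ≥0∞} {q : ℝ≥0} {δ : ℝ}

theorem dist_le_three_mul_of_mem_lowSteepDensity (hc : c * (2 ^ finrank ℝ E + 1) < 1)
    {x y : E} (hx : x ∈ lowSteepDensity μ c f q δ) (hy : y ∈ lowSteepDensity μ c f q δ)
    (hxy : 2 * dist x y ≤ δ) : dist (f x) (f y) ≤ 3 * q * dist x y := by
  rcases eq_or_ne x y with rfl | hne
  · simp
  set ρ := dist x y
  have hρ : 0 < ρ := dist_pos.2 hne
  have hsub : ball y ρ ⊆ ball x (2 * ρ) := ball_subset_ball' (by rw [dist_comm]; linarith)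
  have hsmall : μ (steepSet f q x ∩ ball y ρ) + μ (steepSet f q y ∩ ball y ρ) < μ (ball y ρ) :=
    calc _ ≤ c * μ (ball x (2 * ρ)) + c * μ (ball y ρ) :=
          add_le_add ((measure_mono (inter_subset_inter_right _ hsub)).trans
            (hx _ (by positivity) hxy)) (hy _ hρ (by linarith))
      _ = c * (2 ^ finrank ℝ E + 1) * μ (ball y ρ) := by
          rw [measure_ball_two_mul μ x y ρ]; ring
      _ < 1 * μ (ball y ρ) :=
          ENNReal.mul_lt_mul_left (measure_ball_pos μ y hρ).ne' measure_ball_lt_top.ne hc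
      _ = μ (ball y ρ) := one_mul _
  obtain ⟨z, hzy, hzx_good, hzy_good⟩ := exists_mem_notMem_of_measure_inter_add_lt hsmall
  calc dist (f x) (f y) ≤ dist (f z) (f x) + dist (f z) (f y) := dist_triangle_left _ _ _
    _ ≤ q * dist z x + q * dist z y :=
        add_le_add (dist_le_of_notMem_steepSet hzx_good) (dist_le_of_notMem_steepSet hzy_good)
    _ ≤ q * (2 * ρ) + q * ρ := by
        gcongr
        exacts [(mem_ball.1 (hsub hzy)).le, (mem_ball.1 hzy).le]
    _ = 3 * q * ρ := by ring

theorem lipschitzOnWith_lowSteepDensity_inter_closedBall (hc : c * (2 ^ finrank ℝ E + 1) < 1)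
    (a : E) : LipschitzOnWith (3 * q) f (lowSteepDensity μ c f q δ ∩ closedBall a (δ / 4)) := by
  refine LipschitzOnWith.of_dist_le_mul fun x hx y hy => ?_
  have hxy : 2 * dist x y ≤ δ := by
    linarith [mem_closedBall.1 hx.2, mem_closedBall.1 hy.2, dist_triangle_right x y a]
  simpa using dist_le_three_mul_of_mem_lowSteepDensity hc hx.1 hy.1 hxy

end LowSteepDensity

theorem apSmall.exists_measure_inter_ball_le {n : ℕ} {x : Ec n} {A : Set (Ec n)}
    (hA : apSmall x A) {c : ℝ≥0∞} (hc : 0 < c) :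
    ∃ j : ℕ, ∀ r : ℝ, 0 < r → r ≤ 1 / (j + 1) →
      volume (A ∩ ball x r) ≤ c * volume (ball x r) := by
  obtain ⟨δ, hδ, hA_lt⟩ := Metric.eventually_nhds_iff.1
    (eventually_nhdsWithin_iff.1 (hA.eventually (gt_mem_nhds hc)))
  obtain ⟨j, hj⟩ := exists_nat_one_div_lt hδ
  refine ⟨j, fun r hr hrj => ?_⟩
  have hr_dist : dist r 0 < δ := by
    rw [Real.dist_eq, sub_zero, abs_of_pos hr]
    exact hrj.trans_lt hj
  exact (ENNReal.div_lt_iff (Or.inl (measure_ball_pos _ x hr).ne')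
    (Or.inl measure_ball_lt_top.ne)).1 (hA_lt hr_dist hr) |>.le

theorem exists_mem_lowSteepDensity {n : ℕ} {Y : Type*} [PseudoMetricSpace Y] {f : Ec n → Y}
    {x : Ec n} {lam : ℝ} (hx : apSmall x (steepSet f lam x)) {c : ℝ≥0∞} (hc : 0 < c) :
    ∃ q j : ℕ, x ∈ lowSteepDensity volume c f q (1 / (j + 1)) := by
  obtain ⟨q, hq⟩ := exists_nat_ge lam
  obtain ⟨j, hj⟩ := hx.exists_measure_inter_ball_le hc
  exact ⟨q, j, fun r hr hrj =>
    (measure_mono (inter_subset_inter_left _ (steepSet_anti (by simpa using hq)))).trans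
      (hj r hr hrj)⟩

theorem luzin_N_property_general {n m : ℕ} (f : Ec n → Ec m)
    (N₀ : Set (Ec n)) (hN₀ : N₀.Countable)
    (h : ∀ x ∉ N₀, ∃ lam : ℝ,
      apSmall x {y | y ≠ x ∧ lam * ‖y - x‖ ≤ ‖f y - f x‖}) :
    ∀ s : ℝ, 0 < s → s ≤ n →
      ∀ E : Set (Ec n), μH[s] E = 0 → μH[s] (f '' E) = 0 := by
  intro s hs _ E hE
  obtain ⟨c, hc_pos, hc⟩ :=
    ENNReal.exists_pos_mul_lt (a := 2 ^ finrank ℝ (Ec n) + 1) (by simp) one_ne_zero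
  let a := TopologicalSpace.denseSeq (Ec n)
  let piece : ℕ × ℕ × ℕ → Set (Ec n) := fun ⟨q, j, d⟩ =>
    lowSteepDensity volume c f q (1 / (j + 1)) ∩ closedBall (a d) (1 / (j + 1) / 4)
  refine hausdorffMeasure_image_eq_zero_of_subset_union_iUnion hs hN₀ (t := piece)
    (fun _ => lipschitzOnWith_lowSteepDensity_inter_closedBall hc _) hE fun x hxE => ?_
  by_cases hxN : x ∈ N₀
  · exact Or.inl hxN
  obtain ⟨lam, hlam⟩ := h x hxN
  obtain ⟨q, j, hx⟩ :=
    exists_mem_lowSteepDensity (f := f) (lam := lam)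
      (by simpa only [steepSet, dist_eq_norm] using hlam) hc_pos
  obtain ⟨d, hd⟩ := (TopologicalSpace.denseRange_denseSeq (Ec n)).exists_dist_lt x
    (by positivity : (0 : ℝ) < 1 / (j + 1) / 4)
  exact Or.inr (mem_iUnion.2 ⟨(q, j, d), hx, mem_closedBall.2 hd.le⟩)

/-- if `ap-limsup_{y→x} |f(y)-f(x)|/|y-x| < ∞` outside a countable set `N₀`,
then `f` satisfies Luzin's `N`-property with respect to `H^s` for every `s ∈ (0, n]`. -/
theorem luzin_N_property {n m : ℕ} (f : Ec n → Ec m) (hf : Measurable f)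
    (N₀ : Set (Ec n)) (hN₀ : N₀.Countable)
    (h : ∀ x ∉ N₀, ∃ lam : ℝ,
      apSmall x {y | y ≠ x ∧ lam * ‖y - x‖ ≤ ‖f y - f x‖}) :
    ∀ s : ℝ, 0 < s → s ≤ n →
      ∀ E : Set (Ec n), μH[s] E = 0 → μH[s] (f '' E) = 0 :=
  luzin_N_property_general f N₀ hN₀ h

end
end

section
/- Let s ∈ (0,1], f: ℝⁿ → ℝᵐ measurable, and suppose that for all x outside a countable set N₀, ap-limsup_{y→x} |f(y)-f(x)|/|y-x|^s < ∞. Then for every set A ⊆ ℝⁿ with H^{sm}(A) = 0, one has Lᵐ(f(A)) = 0. -/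
open MeasureTheory Metric Filter Set

noncomputable section

/-! Off `N₀`, the set where `‖f y - f x‖ ≥ k ‖y - x‖ ^ s` has density at most `ε` in every ball
`ball x t`, `t < δ`, for some `k ∈ ℕ` and `δ = 1 / (j + 1)`. For two such points `x, z` with
`2 ‖x - z‖ < δ` and `ε` small against the doubling constant, the two exceptional sets cannot cover
`ball x ‖x - z‖`, and a point `y` outside both gives `‖f x - f z‖ ≤ (1 + 2 ^ s) k ‖x - z‖ ^ s`.
So `ℝⁿ` is a countable union of singletons and of sets on which `f` is `s`-Hölder; an `s`-Hölder
map sends `μH[s * m]`-null sets to `μH[m]`-null sets, and `μH[m]` is a Haar measure on `ℝᵐ`. -/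

open scoped ENNReal NNReal
open Module

theorem holderOnWith_of_dist_le {X Y : Type*} [PseudoMetricSpace X] [PseudoMetricSpace Y]
    {C r : ℝ≥0} {f : X → Y} {S : Set X}
    (h : ∀ x ∈ S, ∀ y ∈ S, dist (f x) (f y) ≤ C * dist x y ^ (r : ℝ)) :
    HolderOnWith C r f S := by
  intro x hx y hy
  rw [edist_dist, edist_dist, ← ENNReal.ofReal_coe_nnreal,
    ENNReal.ofReal_rpow_of_nonneg dist_nonneg r.coe_nonneg,
    ← ENNReal.ofReal_mul C.coe_nonneg]
  exact ENNReal.ofReal_le_ofReal (h x hx y hy)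

theorem hausdorffMeasure_image_eq_zero_of_holderOnWith_cover {X Y : Type*}
    [EMetricSpace X] [MeasurableSpace X] [BorelSpace X]
    [EMetricSpace Y] [MeasurableSpace Y] [BorelSpace Y]
    {r : ℝ≥0} {d : ℝ} {f : X → Y} {𝒮 : Set (Set X)} {A : Set X}
    (hr : 0 < r) (hd : 0 ≤ d) (h𝒮 : 𝒮.Countable) (hf : ∀ S ∈ 𝒮, ∃ C, HolderOnWith C r f S)
    (hA : A ⊆ ⋃₀ 𝒮) (hA0 : μH[r * d] A = 0) : μH[d] (f '' A) = 0 := by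
  have hpiece : ∀ S ∈ 𝒮, μH[d] (f '' (A ∩ S)) = 0 := fun S hS => by
    obtain ⟨C, hC⟩ := hf S hS
    refine le_antisymm ?_ zero_le
    calc μH[d] (f '' (A ∩ S)) ≤ (C : ℝ≥0∞) ^ d * μH[r * d] (A ∩ S) :=
          (hC.mono inter_subset_right).hausdorffMeasure_image_le hr hd
      _ = 0 := by rw [measure_mono_null inter_subset_left hA0, mul_zero]
  have hcover : f '' A ⊆ ⋃ S ∈ 𝒮, f '' (A ∩ S) := by
    rintro _ ⟨x, hxA, rfl⟩
    obtain ⟨S, hS, hxS⟩ := hA hxA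
    exact mem_biUnion hS ⟨x, ⟨hxA, hxS⟩, rfl⟩
  exact measure_mono_null hcover ((measure_biUnion_null_iff h𝒮).2 hpiece)

section Density

variable {E F : Type*} [NormedAddCommGroup E] [NormedAddCommGroup F]

def holderExceedSet (f : E → F) (s L : ℝ) (x : E) : Set E :=
  {y | y ≠ x ∧ L * ‖y - x‖ ^ s ≤ ‖f y - f x‖}

theorem holderExceedSet_anti {f : E → F} {s L L' : ℝ} (x : E) (hL : L ≤ L') :
    holderExceedSet f s L' x ⊆ holderExceedSet f s L x :=
  fun _ ⟨hne, hy⟩ => ⟨hne, (mul_le_mul_of_nonneg_right hL (by positivity)).trans hy⟩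

theorem norm_sub_le_of_notMem_holderExceedSet {f : E → F} {s L : ℝ} {x y : E} (hL : 0 ≤ L)
    (hy : y ∉ holderExceedSet f s L x) : ‖f y - f x‖ ≤ L * ‖y - x‖ ^ s := by
  rcases eq_or_ne y x with rfl | hyx
  · simp only [sub_self, norm_zero]
    positivity
  · exact (not_le.1 fun h => hy ⟨hyx, h⟩).le

variable [MeasurableSpace E]

def holderGoodSet (μ : Measure E) (f : E → F) (s L : ℝ) (ε : ℝ≥0∞) (δ : ℝ) : Set E :=
  {x | ∀ t ∈ Ioo 0 δ, μ (holderExceedSet f s L x ∩ ball x t) ≤ ε * μ (ball x t)}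

variable [NormedSpace ℝ E] [FiniteDimensional ℝ E] [BorelSpace E] (μ : Measure E)
  [μ.IsAddHaarMeasure]

theorem addHaar_ball_two_mul (x z : E) (t : ℝ) :
    μ (ball z (2 * t)) = 2 ^ finrank ℝ E * μ (ball x t) := by
  rw [Measure.addHaar_ball_mul_of_pos μ z two_pos, Measure.addHaar_ball_center μ x,
    ENNReal.ofReal_pow zero_le_two, ENNReal.ofReal_ofNat]

theorem exists_mem_ball_notMem_holderExceedSet {f : E → F} {s L δ : ℝ} {ε : ℝ≥0∞}
    (hε : ε < (2 ^ (finrank ℝ E + 1))⁻¹) {x z : E}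
    (hx : x ∈ holderGoodSet μ f s L ε δ) (hz : z ∈ holderGoodSet μ f s L ε δ)
    (hxz : 0 < dist x z) (hδ : 2 * dist x z < δ) :
    ∃ y ∈ ball x (dist x z), y ∉ holderExceedSet f s L x ∧ y ∉ holderExceedSet f s L z := by
  set t := dist x z
  by_contra! hcov
  have hsub : ball x t ⊆ (holderExceedSet f s L x ∩ ball x (2 * t)) ∪
      (holderExceedSet f s L z ∩ ball z (2 * t)) := by
    intro y hy
    have hyx : dist y x < t := hy
    by_cases hyEx : y ∈ holderExceedSet f s L x
    · exact Or.inl ⟨hyEx, mem_ball.2 (by linarith)⟩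
    · refine Or.inr ⟨hcov y hy hyEx, mem_ball.2 ?_⟩
      linarith [dist_triangle y x z]
  have hV0 : μ (ball x t) ≠ 0 := (measure_ball_pos μ x hxz).ne'
  have hVtop : μ (ball x t) ≠ ⊤ := measure_ball_lt_top.ne
  have hδ2 : 2 * t ∈ Ioo 0 δ := ⟨by linarith, hδ⟩
  have hle : μ (ball x t) ≤ ε * 2 ^ (finrank ℝ E + 1) * μ (ball x t) :=
    calc μ (ball x t)
        ≤ μ (holderExceedSet f s L x ∩ ball x (2 * t)) +
            μ (holderExceedSet f s L z ∩ ball z (2 * t)) :=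
          (measure_mono hsub).trans (measure_union_le _ _)
      _ ≤ ε * μ (ball x (2 * t)) + ε * μ (ball z (2 * t)) :=
          add_le_add (hx _ hδ2) (hz _ hδ2)
      _ = ε * 2 ^ (finrank ℝ E + 1) * μ (ball x t) := by
          rw [addHaar_ball_two_mul μ x x, addHaar_ball_two_mul μ x z, pow_succ]
          ring
  have hε1 : ε * 2 ^ (finrank ℝ E + 1) < 1 := ENNReal.mul_lt_of_lt_div (by rwa [one_div])
  have hlt : ε * 2 ^ (finrank ℝ E + 1) * μ (ball x t) < μ (ball x t) :=
    ENNReal.mul_lt_of_lt_div (by rwa [ENNReal.div_self hV0 hVtop])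
  exact hlt.not_ge hle

theorem norm_sub_le_of_mem_holderGoodSet {f : E → F} {s L δ : ℝ} {ε : ℝ≥0∞} (hs : 0 ≤ s)
    (hL : 0 ≤ L) (hε : ε < (2 ^ (finrank ℝ E + 1))⁻¹) {x z : E}
    (hx : x ∈ holderGoodSet μ f s L ε δ) (hz : z ∈ holderGoodSet μ f s L ε δ)
    (hδ : 2 * dist x z < δ) :
    ‖f x - f z‖ ≤ (1 + 2 ^ s) * L * dist x z ^ s := by
  rcases eq_or_ne x z with rfl | hne
  · simp only [sub_self, norm_zero]
    positivity
  set t := dist x z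
  have ht : 0 < t := dist_pos.2 hne
  obtain ⟨y, hy, hyx, hyz⟩ := exists_mem_ball_notMem_holderExceedSet μ hε hx hz ht hδ
  have hyx' : ‖y - x‖ ≤ t := (mem_ball_iff_norm.1 hy).le
  have hyz' : ‖y - z‖ ≤ 2 * t := by
    rw [← dist_eq_norm]
    linarith [dist_triangle y x z, mem_ball.1 hy]
  calc ‖f x - f z‖ ≤ ‖f y - f x‖ + ‖f y - f z‖ :=
        (norm_sub_le_norm_sub_add_norm_sub _ (f y) _).trans_eq (by rw [norm_sub_rev (f x)])
    _ ≤ L * ‖y - x‖ ^ s + L * ‖y - z‖ ^ s :=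
        add_le_add (norm_sub_le_of_notMem_holderExceedSet hL hyx)
          (norm_sub_le_of_notMem_holderExceedSet hL hyz)
    _ ≤ L * t ^ s + L * (2 * t) ^ s := by gcongr
    _ = (1 + 2 ^ s) * L * t ^ s := by
        rw [Real.mul_rpow zero_le_two ht.le]
        ring

theorem holderOnWith_holderGoodSet_inter_ball {f : E → F} {s L δ : ℝ} {ε : ℝ≥0∞} (hs : 0 ≤ s)
    (hL : 0 ≤ L) (hε : ε < (2 ^ (finrank ℝ E + 1))⁻¹) (c : E) :
    HolderOnWith ((1 + 2 ^ s) * L).toNNReal s.toNNReal f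
      (holderGoodSet μ f s L ε δ ∩ ball c (δ / 4)) := by
  refine holderOnWith_of_dist_le fun x hx z hz => ?_
  have hxz : 2 * dist x z < δ := by
    linarith [dist_triangle_right x z c, mem_ball.1 hx.2, mem_ball.1 hz.2]
  rw [Real.coe_toNNReal _ hs, Real.coe_toNNReal _ (by positivity), dist_eq_norm]
  exact norm_sub_le_of_mem_holderGoodSet μ hs hL hε hx.1 hz.1 hxz

end Density

theorem exists_nat_mem_holderGoodSet_of_apSmall {n : ℕ} {F : Type*} [NormedAddCommGroup F]
    {f : Ec n → F} {s lam : ℝ} {ε : ℝ≥0∞} (hε : 0 < ε) {x : Ec n}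
    (hx : apSmall x (holderExceedSet f s lam x)) :
    ∃ k j : ℕ, x ∈ holderGoodSet volume f s k ε (1 / (j + 1)) := by
  obtain ⟨δ, hδ, hsmall⟩ := (nhdsGT_basis (0 : ℝ)).eventually_iff.1
    (hx.eventually (gt_mem_nhds hε))
  obtain ⟨j, hj⟩ := exists_nat_one_div_lt hδ
  refine ⟨⌈lam⌉₊, j, fun t ht => ?_⟩
  have hratio := hsmall ⟨ht.1, ht.2.trans hj⟩
  calc volume (holderExceedSet f s ⌈lam⌉₊ x ∩ ball x t)
      ≤ volume (holderExceedSet f s lam x ∩ ball x t) :=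
        measure_mono (inter_subset_inter_left _ (holderExceedSet_anti x (Nat.le_ceil lam)))
    _ ≤ ε * volume (ball x t) :=
        (ENNReal.div_le_iff (measure_ball_pos _ x ht.1).ne' measure_ball_lt_top.ne).1 hratio.le

theorem exists_countable_holderOnWith_cover {n : ℕ} {F : Type*} [NormedAddCommGroup F]
    {f : Ec n → F} {s : ℝ} (hs : 0 ≤ s) {N₀ : Set (Ec n)} (hN₀ : N₀.Countable)
    (h : ∀ x ∉ N₀, ∃ lam : ℝ, apSmall x (holderExceedSet f s lam x)) :
    ∃ 𝒮 : Set (Set (Ec n)), 𝒮.Countable ∧ (∀ S ∈ 𝒮, ∃ C, HolderOnWith C s.toNNReal f S) ∧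
      ⋃₀ 𝒮 = univ := by
  set ε : ℝ≥0∞ := (2 ^ (finrank ℝ (Ec n) + 1))⁻¹ / 2
  have hpos : (2 ^ (finrank ℝ (Ec n) + 1) : ℝ≥0∞)⁻¹ ≠ 0 :=
    ENNReal.inv_ne_zero.2 (ENNReal.pow_ne_top (by simp))
  have hε0 : 0 < ε := ENNReal.half_pos hpos
  have hε : ε < (2 ^ (finrank ℝ (Ec n) + 1))⁻¹ :=
    ENNReal.half_lt_self hpos (ENNReal.inv_ne_top.2 (by simp))
  set c := TopologicalSpace.denseSeq (Ec n)
  set piece : ℕ × ℕ × ℕ → Set (Ec n) := fun p =>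
    holderGoodSet volume f s p.1 ε (1 / (p.2.1 + 1)) ∩ ball (c p.2.2) (1 / (p.2.1 + 1) / 4)
  refine ⟨(fun x => {x}) '' N₀ ∪ range piece, (hN₀.image _).union (countable_range _),
    ?_, ?_⟩
  · rintro S (⟨x, -, rfl⟩ | ⟨⟨k, j, i⟩, rfl⟩)
    · exact ⟨0, holderOnWith_singleton _ _ _ _⟩
    · exact ⟨_, holderOnWith_holderGoodSet_inter_ball volume hs k.cast_nonneg hε (c i)⟩
  · refine eq_univ_of_forall fun x => ?_
    by_cases hx : x ∈ N₀
    · exact ⟨{x}, Or.inl ⟨x, hx, rfl⟩, rfl⟩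
    obtain ⟨lam, hlam⟩ := h x hx
    obtain ⟨k, j, hkj⟩ := exists_nat_mem_holderGoodSet_of_apSmall hε0 hlam
    obtain ⟨i, hi⟩ := (TopologicalSpace.denseRange_denseSeq (Ec n)).exists_dist_lt x
      (show (0 : ℝ) < 1 / (j + 1) / 4 by positivity)
    exact ⟨piece (k, j, i), Or.inr (mem_range_self _), hkj, hi⟩

theorem image_null_of_hausdorff_null_general {n m : ℕ} (s : ℝ) (hs0 : 0 < s)
    (f : Ec n → Ec m)
    (N₀ : Set (Ec n)) (hN₀ : N₀.Countable)
    (h : ∀ x ∉ N₀, ∃ lam : ℝ,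
      apSmall x {y | y ≠ x ∧ lam * Real.rpow ‖y - x‖ s ≤ ‖f y - f x‖}) :
    ∀ A : Set (Ec n), μH[s * m] A = 0 → volume (f '' A) = 0 := by
  intro A hA
  obtain ⟨𝒮, h𝒮, hholder, hcover⟩ := exists_countable_holderOnWith_cover hs0.le hN₀ h
  refine Measure.absolutelyContinuous_isAddHaarMeasure _ μH[m] ?_
  refine hausdorffMeasure_image_eq_zero_of_holderOnWith_cover (Real.toNNReal_pos.2 hs0)
    m.cast_nonneg h𝒮 hholder (hcover ▸ subset_univ A) ?_
  rwa [Real.coe_toNNReal s hs0.le]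

/-- if `s ∈ (0,1]` and `ap-limsup_{y→x} |f(y)-f(x)|/|y-x|^s < ∞` outside a
countable set `N₀`, then `f` maps sets of `H^{sm}`-measure zero to sets of Lebesgue
measure zero in `ℝᵐ`. -/
theorem image_null_of_hausdorff_null {n m : ℕ} (s : ℝ) (hs0 : 0 < s) (hs1 : s ≤ 1)
    (f : Ec n → Ec m) (hf : Measurable f)
    (N₀ : Set (Ec n)) (hN₀ : N₀.Countable)
    (h : ∀ x ∉ N₀, ∃ lam : ℝ,
      apSmall x {y | y ≠ x ∧ lam * Real.rpow ‖y - x‖ s ≤ ‖f y - f x‖}) :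
    ∀ A : Set (Ec n), μH[s * m] A = 0 → volume (f '' A) = 0 :=
  image_null_of_hausdorff_null_general s hs0 f N₀ hN₀ h
end
end
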